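/- arXiv:2101.05234 — 3 statements merged into one kernel-verified Lean document; each statement's English description precedes it below -/
import Mathlib

section
/- The Hellinger loss ℓ_hel(p) = (√p - 1)² is 3-mixable: the map p ↦ exp(-3(√p - 1)²) is concave on [0,1]. -/
open Real Set

private lemma sqrt_deriv_aux {x : ℝ} (hx : x ∈ Set.Ioo (0:ℝ) 1) :
    HasDerivAt (fun p : ℝ => Real.exp (-(3 : ℝ) * (Real.sqrt p - 1) ^ 2))
      (Real.exp (-(3 : ℝ) * (Real.sqrt x - 1) ^ 2) * (3 / Real.sqrt x - 3)) x := by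
  have hx0 : x ≠ 0 := ne_of_gt hx.1
  have hsx : 0 < Real.sqrt x := Real.sqrt_pos.2 hx.1
  have hs : HasDerivAt Real.sqrt (1 / (2 * Real.sqrt x)) x := Real.hasDerivAt_sqrt hx0
  have h1 : HasDerivAt (fun p : ℝ => -(3 : ℝ) * (Real.sqrt p - 1) ^ 2)
      (-(3 : ℝ) * (2 * (Real.sqrt x - 1) ^ 1 * (1 / (2 * Real.sqrt x)))) x := by
    exact ((hs.sub_const 1).pow 2).const_mul (-(3 : ℝ))
  have h2 := h1.exp
  convert h2 using 1
  field_simp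
  ring

private lemma inner_ineq {s : ℝ} (hs0 : 0 < s) (hs1 : s < 1) :
    (3 / s - 3) ^ 2 - 3 / (2 * (s * s * s)) ≤ 0 := by
  rw [sub_nonpos]
  have key : 6 * s * (1 - s) ^ 2 ≤ 1 := by
    nlinarith [sq_nonneg (3 * s - 1), mul_nonneg (sq_nonneg (3 * s - 1)) (sub_nonneg.2 hs1.le)]
  have h1 : (3 / s - 3) ^ 2 = 9 * (1 - s) ^ 2 / s ^ 2 := by
    field_simp; ring
  rw [h1, div_le_div_iff₀ (by positivity) (by positivity)]
  nlinarith [mul_le_mul_of_nonneg_right key (sq_nonneg s), mul_pos hs0 hs0]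

/-- The Hellinger loss ℓ_hel(p) = (√p - 1)² is 3-mixable:
p ↦ exp(-3(√p - 1)²) is concave on [0,1]. -/
theorem hellinger_loss_three_mixable :
    ConcaveOn ℝ (Set.Icc (0 : ℝ) 1)
      (fun p : ℝ => Real.exp (-(3 : ℝ) * (Real.sqrt p - 1) ^ 2)) := by
  have hint : interior (Set.Icc (0:ℝ) 1) = Set.Ioo (0:ℝ) 1 := interior_Icc
  refine concaveOn_of_hasDerivWithinAt2_nonpos (convex_Icc 0 1)
    (f' := fun x => Real.exp (-(3 : ℝ) * (Real.sqrt x - 1) ^ 2) * (3 / Real.sqrt x - 3))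
    (f'' := fun x => Real.exp (-(3 : ℝ) * (Real.sqrt x - 1) ^ 2) *
      ((3 / Real.sqrt x - 3) ^ 2 - 3 / (2 * (Real.sqrt x * Real.sqrt x * Real.sqrt x))))
    ?_ ?_ ?_ ?_
  · exact (Real.continuous_exp.comp (by continuity)).continuousOn
  · intro x hx
    rw [hint] at hx
    exact (sqrt_deriv_aux hx).hasDerivWithinAt
  · intro x hx
    rw [hint] at hx
    have hx0 : x ≠ 0 := ne_of_gt hx.1
    have hsx : 0 < Real.sqrt x := Real.sqrt_pos.2 hx.1
    have hs : HasDerivAt Real.sqrt (1 / (2 * Real.sqrt x)) x := Real.hasDerivAt_sqrt hx0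
    have hinv : HasDerivAt (fun p : ℝ => (Real.sqrt p)⁻¹)
        (-(1 / (2 * Real.sqrt x)) / (Real.sqrt x) ^ 2) x := hs.inv (ne_of_gt hsx)
    have hh : HasDerivAt (fun p : ℝ => 3 / Real.sqrt p - 3)
        (3 * (-(1 / (2 * Real.sqrt x)) / (Real.sqrt x) ^ 2)) x := by
      simpa [div_eq_mul_inv] using (hinv.const_mul (3:ℝ)).sub_const 3
    have hmul := (sqrt_deriv_aux hx).mul hh
    refine (hmul.congr_deriv ?_).hasDerivWithinAt
    have h2 : Real.sqrt x ≠ 0 := ne_of_gt hsx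
    field_simp
    ring
  · intro x hx
    rw [hint] at hx
    have hsx : 0 < Real.sqrt x := Real.sqrt_pos.2 hx.1
    have hsx1 : Real.sqrt x < 1 := by
      have := Real.sqrt_lt_sqrt hx.1.le hx.2
      simpa using this
    exact mul_nonpos_of_nonneg_of_nonpos (Real.exp_pos _).le (inner_ineq hsx hsx1)
end

section
/- Exponential weights regret bound for mixable losses over a finite expert set: if ℓ is η-mixable, and at each round t the learner plays a prediction p̂_t satisfying exp(−η ℓ(p̂_t, y)) ≥ Σ_k w_t(k) exp(−η ℓ(p_k, y)) for all y, where w_t(k) ∝ exp(−η Σ_{s<t} ℓ(p_k(x_s), y_s)), then for any sequence (y_1,…,y_n) and any expert k*, Σ_t ℓ(p̂_t, y_t) − Σ_t ℓ(p_{k*}(x_t), y_t) ≤ (log K)/η, where K is the number of experts. -/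
/-!
The potential `W t = ∑ₖ exp (-η Lₜ(k))`, with `Lₜ(k)` the cumulative loss of expert `k` before
round `t`, starts at `K`. The mixability inequality at round `t`, multiplied by `W t`, says exactly
`W (t + 1) ≤ exp (-η bₜ) W t`, so `W n ≤ K exp (-η ∑ₜ bₜ)`. Since `W n` dominates each of its
summands `exp (-η Lₙ(k*))`, taking logarithms gives the regret bound.
-/

open Finset Real

section ExponentialWeights

variable {ι : Type*} [Fintype ι]

noncomputable def expPotential (η : ℝ) (a : ℕ → ι → ℝ) (t : ℕ) : ℝ :=
  ∑ k, exp (-η * ∑ s ∈ range t, a s k)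

theorem sum_exp_add_le_of_mixable [Nonempty ι] {η β : ℝ} (L x : ι → ℝ)
    (hmix : ∑ k, (exp (-η * L k) / ∑ j, exp (-η * L j)) * exp (-η * x k) ≤ exp (-η * β)) :
    ∑ k, exp (-η * (L k + x k)) ≤ exp (-η * β) * ∑ k, exp (-η * L k) :=
  have hW : 0 < ∑ j, exp (-η * L j) := sum_pos (fun _ _ => exp_pos _) univ_nonempty
  calc ∑ k, exp (-η * (L k + x k))
      = (∑ k, (exp (-η * L k) / ∑ j, exp (-η * L j)) * exp (-η * x k)) *
          ∑ j, exp (-η * L j) := by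
        rw [sum_mul]
        refine sum_congr rfl fun k _ => ?_
        rw [mul_add, exp_add]
        field_simp
    _ ≤ exp (-η * β) * ∑ k, exp (-η * L k) := by gcongr

theorem expPotential_zero (η : ℝ) (a : ℕ → ι → ℝ) :
    expPotential η a 0 = Fintype.card ι := by
  simp [expPotential]

theorem expPotential_succ_le [Nonempty ι] {η : ℝ} {a : ℕ → ι → ℝ} {b : ℕ → ℝ} {t : ℕ}
    (hmix : ∑ k, (exp (-η * ∑ s ∈ range t, a s k) / expPotential η a t) * exp (-η * a t k) ≤
      exp (-η * b t)) :
    expPotential η a (t + 1) ≤ exp (-η * b t) * expPotential η a t := by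
  simpa only [expPotential, sum_range_succ] using sum_exp_add_le_of_mixable _ _ hmix

theorem expPotential_le [Nonempty ι] {η : ℝ} {a : ℕ → ι → ℝ} {b : ℕ → ℝ} {n : ℕ}
    (hmix : ∀ t < n,
      ∑ k, (exp (-η * ∑ s ∈ range t, a s k) / expPotential η a t) * exp (-η * a t k) ≤
        exp (-η * b t)) :
    expPotential η a n ≤ Fintype.card ι * exp (-η * ∑ t ∈ range n, b t) := by
  induction n with
  | zero => simp [expPotential_zero]
  | succ n ih =>
    calc expPotential η a (n + 1)
        ≤ exp (-η * b n) * expPotential η a n := expPotential_succ_le (hmix n n.lt_succ_self)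
      _ ≤ exp (-η * b n) * (Fintype.card ι * exp (-η * ∑ t ∈ range n, b t)) := by
        gcongr
        exact ih fun t ht => hmix t (ht.trans n.lt_succ_self)
      _ = Fintype.card ι * exp (-η * ∑ t ∈ range (n + 1), b t) := by
        rw [sum_range_succ, mul_add, exp_add]
        ring

theorem exp_neg_mul_sum_le_expPotential (η : ℝ) (a : ℕ → ι → ℝ) (n : ℕ) (k : ι) :
    exp (-η * ∑ s ∈ range n, a s k) ≤ expPotential η a n :=
  single_le_sum (f := fun k => exp (-η * ∑ s ∈ range n, a s k))
    (fun _ _ => (exp_pos _).le) (mem_univ k)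

theorem regret_le_log_card_div_of_mixable {η : ℝ} (hη : 0 < η) {a : ℕ → ι → ℝ} {b : ℕ → ℝ}
    {n : ℕ} (hmix : ∀ t < n,
      ∑ k, (exp (-η * ∑ s ∈ range t, a s k) / expPotential η a t) * exp (-η * a t k) ≤
        exp (-η * b t))
    (kstar : ι) :
    ∑ t ∈ range n, b t - ∑ t ∈ range n, a t kstar ≤ log (Fintype.card ι) / η := by
  have : Nonempty ι := ⟨kstar⟩
  have hexp : exp (-η * ∑ t ∈ range n, a t kstar) ≤
      Fintype.card ι * exp (-η * ∑ t ∈ range n, b t) :=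
    (exp_neg_mul_sum_le_expPotential η a n kstar).trans (expPotential_le hmix)
  have hlog := log_le_log (exp_pos _) hexp
  rw [log_mul (by positivity) (exp_pos _).ne', log_exp, log_exp] at hlog
  rw [le_div_iff₀ hη]
  linarith

end ExponentialWeights

theorem Fin.sum_filter_lt_eq_sum_range {M : Type*} [AddCommMonoid M] {n : ℕ} (f : ℕ → M)
    (t : Fin n) : ∑ s ∈ univ.filter (fun s : Fin n => s < t), f s = ∑ s ∈ range t, f s := by
  rw [filter_gt_eq_Iio, ← Nat.Iio_eq_range, ← Fin.map_valEmbedding_Iio, sum_map]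
  rfl

theorem exponential_weights_regret_general (K n : ℕ) (η : ℝ) (hη : 0 < η)
    (a : Fin n → Fin K → ℝ)  -- a t k = ℓ(p_k(x_t), y_t)
    (b : Fin n → ℝ)          -- b t = ℓ(p̂_t, y_t)
    (hmix : ∀ t : Fin n,
      Real.exp (-η * b t) ≥
        ∑ k : Fin K,
          (Real.exp (-η * ∑ s ∈ univ.filter (fun s : Fin n => s < t), a s k) /
            ∑ j : Fin K,
              Real.exp (-η * ∑ s ∈ univ.filter (fun s : Fin n => s < t), a s j)) *
          Real.exp (-η * a t k)) :
    ∀ kstar : Fin K,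
      (∑ t : Fin n, b t) - (∑ t : Fin n, a t kstar) ≤ Real.log K / η := by
  intro kstar
  set a' : ℕ → Fin K → ℝ := fun t k => if h : t < n then a ⟨t, h⟩ k else 0
  set b' : ℕ → ℝ := fun t => if h : t < n then b ⟨t, h⟩ else 0
  have hcum (t : Fin n) (k : Fin K) :
      ∑ s ∈ univ.filter (fun s : Fin n => s < t), a s k = ∑ s ∈ range t, a' s k := by
    rw [← Fin.sum_filter_lt_eq_sum_range]
    simp [a']
  have hmix' : ∀ t < n,
      ∑ k, (exp (-η * ∑ s ∈ range t, a' s k) / expPotential η a' t) * exp (-η * a' t k) ≤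
        exp (-η * b' t) := fun t ht => by
    simpa [expPotential, hcum ⟨t, ht⟩, a', b', ht] using hmix ⟨t, ht⟩
  have hfin (f : Fin n → ℝ) (f' : ℕ → ℝ) (hf : ∀ t : Fin n, f' t = f t) :
      ∑ t : Fin n, f t = ∑ t ∈ range n, f' t := by
    simp only [← Fin.sum_univ_eq_sum_range, hf]
  rw [hfin b b' (by simp [b']), hfin (a · kstar) (a' · kstar) (by simp [a'])]
  simpa only [Fintype.card_fin] using regret_le_log_card_div_of_mixable hη hmix' kstar

/-- Exponential-weights regret bound for η-mixable losses over K experts: if at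
each round t the learner's loss b t certifies the mixability inequality
exp(−η b t) ≥ Σ_k w_t(k) exp(−η a t k y_t) with weights
w_t(k) ∝ exp(−η Σ_{s<t} a s k), then for every expert k*,
Σ_t b t − Σ_t a t k* ≤ (log K)/η. -/
theorem exponential_weights_regret (K n : ℕ) (hK : 0 < K) (η : ℝ) (hη : 0 < η)
    (a : Fin n → Fin K → ℝ)  -- a t k = ℓ(p_k(x_t), y_t)
    (b : Fin n → ℝ)          -- b t = ℓ(p̂_t, y_t)
    (hmix : ∀ t : Fin n,
      Real.exp (-η * b t) ≥
        ∑ k : Fin K,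
          (Real.exp (-η * ∑ s ∈ univ.filter (fun s : Fin n => s < t), a s k) /
            ∑ j : Fin K,
              Real.exp (-η * ∑ s ∈ univ.filter (fun s : Fin n => s < t), a s j)) *
          Real.exp (-η * a t k)) :
    ∀ kstar : Fin K,
      (∑ t : Fin n, b t) - (∑ t : Fin n, a t kstar) ≤ Real.log K / η :=
  exponential_weights_regret_general K n η hη a b hmix
end

section
/- For the quadratic (Brier) scoring loss on binary outcomes, ℓ(p,y) = ½(p(y)−1)² + ½ p(1−y)² where p is a distribution on {0,1}, the loss is ½-mixable: for each y, the map p ↦ exp(−½ ℓ(p,y)) is concave over the one-dimensional simplex parameterized by q = p(1) ∈ [0,1]. -/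
/-!
Both maps are restrictions of shifts of the Gaussian `exp (-t² / 2)`, whose second derivative
`(t² - 1) exp (-t² / 2)` is nonpositive between the inflection points `±1`.
-/

open Real Set

theorem hasDerivAt_exp_neg_half_sq (x : ℝ) :
    HasDerivAt (fun t : ℝ => exp (-(1 / 2 : ℝ) * t ^ 2)) (-x * exp (-(1 / 2 : ℝ) * x ^ 2)) x :=
  ((hasDerivAt_pow 2 x).const_mul (-(1 / 2 : ℝ))).exp.congr_deriv (by ring)

theorem hasDerivAt_neg_mul_exp_neg_half_sq (x : ℝ) :
    HasDerivAt (fun t : ℝ => -t * exp (-(1 / 2 : ℝ) * t ^ 2))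
      ((x ^ 2 - 1) * exp (-(1 / 2 : ℝ) * x ^ 2)) x :=
  ((hasDerivAt_neg x).mul (hasDerivAt_exp_neg_half_sq x)).congr_deriv (by ring)

theorem concaveOn_exp_neg_half_sq :
    ConcaveOn ℝ (Icc (-1) 1) fun t : ℝ => exp (-(1 / 2 : ℝ) * t ^ 2) := by
  refine concaveOn_of_hasDerivWithinAt2_nonpos (convex_Icc _ _) (by fun_prop)
    (fun x _ => (hasDerivAt_exp_neg_half_sq x).hasDerivWithinAt)
    (fun x _ => (hasDerivAt_neg_mul_exp_neg_half_sq x).hasDerivWithinAt) ?_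
  intro x hx
  rw [interior_Icc] at hx
  have hx_sq : x ^ 2 ≤ 1 := by nlinarith [hx.1, hx.2]
  exact mul_nonpos_of_nonpos_of_nonneg (by linarith) (exp_pos _).le

/-- The binary quadratic (Brier) loss is ½-mixable: parameterizing distributions
on {0,1} by q = p(1), for y = 1 the loss is (1−q)² and q ↦ exp(−½(1−q)²) is
concave on [0,1]; symmetrically for y = 0, q ↦ exp(−½ q²) is concave on [0,1]. -/
theorem quadratic_loss_half_mixable :
    ConcaveOn ℝ (Set.Icc (0 : ℝ) 1)
      (fun q : ℝ => Real.exp (-(1 / 2 : ℝ) * (1 - q) ^ 2)) ∧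
    ConcaveOn ℝ (Set.Icc (0 : ℝ) 1)
      (fun q : ℝ => Real.exp (-(1 / 2 : ℝ) * q ^ 2)) := by
  have hsub : Icc (0 : ℝ) 1 ⊆ Icc (-1) 1 := Icc_subset_Icc (by norm_num) le_rfl
  refine ⟨?_, concaveOn_exp_neg_half_sq.subset hsub (convex_Icc _ _)⟩
  have hshift := concaveOn_exp_neg_half_sq.translate_right (-1)
  have hpre : Icc (0 : ℝ) 1 ⊆ (fun q => -1 + q) ⁻¹' Icc (-1) 1 :=
    fun q hq => ⟨by linarith [hq.1], by linarith [hq.2]⟩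
  refine (hshift.subset hpre (convex_Icc _ _)).congr fun q _ => ?_
  simp only [Function.comp_apply]
  ring_nf
end
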